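/- arXiv:1708.06857 — 4 statements merged into one kernel-verified Lean document; each statement's English description precedes it below -/
import Mathlib

section
/- In the gadget graph H built from graph G (cliques for vertices, label-1 edges for edges of G), every (s,s)-trail T in G with at least one edge maps to a path P in H between two distinct nodes of the clique [s], such that T has odd length if and only if P contains an odd number of label-1 edges, and P contains the node corresponding to edge f of G if and only if T uses f. -/
/-- The incidences of a graph `G`: pairs of a vertex and an edge containing it.
These are the nodes of the gadget graph. -/
def Inc {V : Type*} (G : SimpleGraph V) : Type _ :=
  {p : V × Sym2 V // p.2 ∈ G.edgeSet ∧ p.1 ∈ p.2}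

/-- The gadget graph: each vertex `x` of `G` is replaced by a clique on the incidences
at `x` (label-0 edges), and each edge of `G` gives an edge between the two
corresponding incidences (label-1 edges). -/
def gadget {V : Type*} (G : SimpleGraph V) : SimpleGraph (Inc G) where
  Adj a b := a ≠ b ∧ (a.1.1 = b.1.1 ∨ a.1.2 = b.1.2)
  symm := ⟨by
    rintro a b ⟨h1, h2⟩
    exact ⟨h1.symm, by tauto⟩⟩
  loopless := ⟨by rintro a ⟨h1, _⟩; exact h1 rfl⟩

/-- Whether an edge of the gadget graph has label 1, i.e. its two endpoints share
the same underlying edge of `G`. -/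
def isLab1 {V : Type*} [DecidableEq V] (G : SimpleGraph V) : Sym2 (Inc G) → Bool :=
  Sym2.lift ⟨fun a b => decide (a.1.2 = b.1.2), by
    intro a b
    exact decide_eq_decide.mpr ⟨Eq.symm, Eq.symm⟩⟩

/-!
Walk along the trail and, for each edge `e = xy` it uses, enter `[x]` at the node `e`, cross the
label-1 edge to the node `e` of `[y]`, and then take the clique edge of `[y]` to the node of the
next edge of the trail. Since a trail uses each edge once, no node is visited twice; the label-1
edges of the path correspond exactly to the edges of the trail, and the path starts and ends in
`[s]` at the nodes of the first and the last edge, which are different nodes because the path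
contains both ends of the first edge.
-/

namespace Inc

variable {V : Type*} {G : SimpleGraph V} {u v : V}

def left (h : G.Adj u v) : Inc G := ⟨(u, s(u, v)), h, Sym2.mem_mk_left u v⟩

def right (h : G.Adj u v) : Inc G := ⟨(v, s(u, v)), h, Sym2.mem_mk_right u v⟩

theorem left_ne_right (h : G.Adj u v) : left h ≠ right h :=
  fun hc => G.ne_of_adj h (congrArg (fun c : Inc G => c.1.1) hc)

theorem edge_eq_iff (h : G.Adj u v) (c : Inc G) :
    c.1.2 = s(u, v) ↔ c = left h ∨ c = right h := by
  constructor
  · intro hc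
    rcases Sym2.mem_iff.mp (hc ▸ c.2.2) with hx | hx
    · exact Or.inl (Subtype.ext (Prod.ext hx hc))
    · exact Or.inr (Subtype.ext (Prod.ext hx hc))
  · rintro (rfl | rfl) <;> rfl

end Inc

section

variable {V : Type*} {G : SimpleGraph V}

theorem gadget_adj_left_right {u v : V} (h : G.Adj u v) :
    (gadget G).Adj (Inc.left h) (Inc.right h) :=
  ⟨Inc.left_ne_right h, Or.inr rfl⟩

theorem isLab1_left_right [DecidableEq V] {u v : V} (h : G.Adj u v) :
    isLab1 G s(Inc.left h, Inc.right h) = true :=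
  decide_eq_true rfl

open SimpleGraph Walk in
theorem exists_gadget_path_of_isTrail_cons [DecidableEq V] {u x v : V} (h : G.Adj u x)
    (W : G.Walk x v) (hW : (cons h W).IsTrail) :
    ∃ b : Inc G, b.1.1 = v ∧ ∃ P : (gadget G).Walk (Inc.left h) b, P.IsPath ∧
      P.edges.countP (isLab1 G) = (cons h W).length ∧
      ∀ c : Inc G, c ∈ P.support ↔ c.1.2 ∈ (cons h W).edges := by
  induction W generalizing u with
  | nil =>
    refine ⟨Inc.right h, rfl, cons (gadget_adj_left_right h) nil, ?_, ?_, ?_⟩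
    · simpa using Inc.left_ne_right h
    · simp [isLab1_left_right]
    · simp [Inc.edge_eq_iff h]
  | @cons x y v h' W ih =>
    obtain ⟨hW', hfresh⟩ := (isTrail_cons h _).mp hW
    obtain ⟨b, hb, P, hP, hcount, hsupp⟩ := ih h' hW'
    have hedge : s(u, x) ≠ s(x, y) := fun he => hfresh (he ▸ List.mem_cons_self ..)
    have hadj : (gadget G).Adj (Inc.right h) (Inc.left h') :=
      ⟨fun hc => hedge (congrArg (fun c : Inc G => c.1.2) hc), Or.inl rfl⟩
    have hnot_mem (c : Inc G) (hc : c.1.2 = s(u, x)) : c ∉ P.support := by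
      rw [hsupp, hc]; exact hfresh
    refine ⟨b, hb, cons (gadget_adj_left_right h) (cons hadj P), ?_, ?_, ?_⟩
    · refine (hP.cons (hnot_mem _ rfl)).cons ?_
      rw [support_cons, List.mem_cons, not_or]
      exact ⟨Inc.left_ne_right h, hnot_mem _ rfl⟩
    · have hlabel : isLab1 G s(Inc.right h, Inc.left h') = false := decide_eq_false hedge
      simp [isLab1_left_right, hlabel, hcount]
    · intro c
      rw [support_cons, support_cons, edges_cons, List.mem_cons, List.mem_cons, List.mem_cons,
        hsupp, edges_cons, Inc.edge_eq_iff h, or_assoc]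

end

theorem stmt_7 {V : Type*} [DecidableEq V] (G : SimpleGraph V) (s : V)
    (T : G.Walk s s) (hT : T.IsTrail) (hlen : 1 ≤ T.length) :
    ∃ (a b : Inc G), a.1.1 = s ∧ b.1.1 = s ∧ a ≠ b ∧
      ∃ P : (gadget G).Walk a b, P.IsPath ∧
        (Odd T.length ↔ Odd (P.edges.countP (isLab1 G))) ∧
        ∀ c : Inc G, c ∈ P.support ↔ c.1.2 ∈ T.edges := by
  cases T with
  | nil => simp at hlen
  | cons h W =>
    obtain ⟨b, hb, P, hP, hcount, hsupp⟩ := exists_gadget_path_of_isTrail_cons h W hT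
    refine ⟨Inc.left h, b, rfl, hb, ?_, P, hP, by rw [hcount], hsupp⟩
    rintro rfl
    have hright : Inc.right h ∈ P.support := (hsupp _).mpr (List.mem_cons_self ..)
    have hnil : P.Nil := SimpleGraph.Walk.isPath_iff_nil.mp hP
    rw [SimpleGraph.Walk.nil_iff_support_eq.mp hnil, List.mem_singleton] at hright
    exact Inc.left_ne_right h hright.symm
end

section
/- Let G be a graph, s ∈ V(G), and (S,F) a bipartite subgraph of G with s ∈ S. Then the maximum number of pairwise edge-disjoint odd (s,s)-trails in G is at most |E(S)\F| + the sum over components C of G−S of floor(|E(S,C)|/2). -/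
/-!
A trail that stays inside `S` uses only edges of `E(S)`; if they were all in `F`, the
2-colouring of `(S, F)` would force a closed walk at `s` to have even length. So an odd
trail either uses an edge of `E(S) \ F`, or leaves `S` at some vertex `w` of a component `C`
of `G - S`; the segments of the trail before and after `w` then each contain an edge of
`E(S, C)`, and these two edges are distinct since the trail repeats no edge. As the trails are
edge-disjoint, at most `|E(S) \ F|` of them are of the first kind, and for each `C` at most
`⌊|E(S, C)| / 2⌋` contain two edges of `E(S, C)`.
-/

open SimpleGraph Finset

namespace SimpleGraph

variable {V : Type*} {G : SimpleGraph V}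

/-- The set `E(S, C)` for the component `C = K` of `G - S`. -/
def boundaryEdges (G : SimpleGraph V) (S : Set V) (K : (G.induce Sᶜ).ConnectedComponent) :
    Set (Sym2 V) :=
  {e ∈ G.edgeSet | ∃ (x y : V) (hy : y ∈ Sᶜ),
    e = s(x, y) ∧ x ∈ S ∧ (G.induce Sᶜ).connectedComponentMk ⟨y, hy⟩ = K}

namespace Walk

theorem exists_mem_edges_boundaryEdges {S : Set V} {x y : V} (p : G.Walk x y) (hx : x ∉ S)
    (hy : y ∈ S) :
    ∃ e ∈ p.edges,
      e ∈ G.boundaryEdges S ((G.induce Sᶜ).connectedComponentMk ⟨x, hx⟩) := by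
  induction p with
  | nil => exact absurd hy hx
  | @cons x b y h q ih =>
    by_cases hb : b ∈ S
    · exact ⟨s(x, b), by simp, h, b, x, hx, Sym2.eq_swap, hb, rfl⟩
    · obtain ⟨e, he, hK⟩ := ih hb hy
      have hxb : (G.induce Sᶜ).connectedComponentMk ⟨x, hx⟩ =
          (G.induce Sᶜ).connectedComponentMk ⟨b, hb⟩ :=
        ConnectedComponent.sound (Adj.reachable (by exact h))
      exact ⟨e, by simp [he], hxb ▸ hK⟩

theorem exists_mem_edges_notMem_of_odd_length {F : Set (Sym2 V)} {col : V → Bool}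
    (hcol : ∀ x y : V, s(x, y) ∈ F → col x ≠ col y) {u : V} (p : G.Walk u u)
    (hodd : Odd p.length) : ∃ e ∈ p.edges, e ∉ F := by
  by_contra! hF
  let c : (fromEdgeSet F).Coloring Bool := Coloring.mk col fun h => hcol _ _ h.1
  have hsub : ∀ e ∈ p.edges, e ∈ (fromEdgeSet F).edgeSet := fun e he => by
    rw [edgeSet_fromEdgeSet]
    exact ⟨hF e he, G.not_isDiag_of_mem_edgeSet (p.edges_subset_edgeSet he)⟩
  have := (c.odd_length_iff_not_congr (p.transfer _ hsub)).1 (by rwa [length_transfer])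
  simp at this

namespace IsTrail

theorem one_lt_ncard_edgeSet_inter_boundaryEdges [DecidableEq V] {S : Set V} {u w : V}
    {p : G.Walk u u} (hp : p.IsTrail) (hu : u ∈ S) (hw : w ∈ p.support) (hwS : w ∉ S) :
    1 < (p.edgeSet ∩
      G.boundaryEdges S ((G.induce Sᶜ).connectedComponentMk ⟨w, hwS⟩)).ncard := by
  obtain ⟨e₁, he₁, hb₁⟩ :=
    (p.takeUntil w hw).reverse.exists_mem_edges_boundaryEdges hwS hu
  obtain ⟨e₂, he₂, hb₂⟩ := (p.dropUntil w hw).exists_mem_edges_boundaryEdges hwS hu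
  rw [edges_reverse, List.mem_reverse] at he₁
  have hnd := hp.edges_nodup
  rw [← p.take_spec hw, edges_append, List.nodup_append] at hnd
  exact (Set.one_lt_ncard_iff (p.edges.finite_toSet.inter_of_left (G.boundaryEdges S _))).2
    ⟨e₁, e₂, ⟨p.edges_takeUntil_subset_edges hw he₁, hb₁⟩,
      ⟨p.edges_dropUntil_subset_edges hw he₂, hb₂⟩, hnd.2.2 _ he₁ _ he₂⟩

theorem edgeSet_inter_nonempty_or_one_lt_ncard_boundaryEdges [DecidableEq V] {S : Set V}
    {F : Set (Sym2 V)} {col : V → Bool} (hcol : ∀ x y : V, s(x, y) ∈ F → col x ≠ col y)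
    {u : V} {p : G.Walk u u} (hp : p.IsTrail) (hodd : Odd p.length) (hu : u ∈ S) :
    (p.edgeSet ∩ {e ∈ G.edgeSet | (∀ x ∈ e, x ∈ S) ∧ e ∉ F}).Nonempty ∨
      ∃ K, 1 < (p.edgeSet ∩ G.boundaryEdges S K).ncard := by
  by_cases hexit : ∃ w ∈ p.support, w ∉ S
  · obtain ⟨w, hw, hwS⟩ := hexit
    exact .inr ⟨_, hp.one_lt_ncard_edgeSet_inter_boundaryEdges hu hw hwS⟩
  · obtain ⟨e, he, heF⟩ := p.exists_mem_edges_notMem_of_odd_length hcol hodd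
    exact .inl ⟨e, he, p.edges_subset_edgeSet he,
      fun x hx => not_not.1 fun hxS => hexit ⟨x, mem_support_of_mem_edges he hx, hxS⟩, heF⟩

end IsTrail

end Walk

end SimpleGraph

theorem Finset.mul_card_le_ncard_of_pairwiseDisjoint {ι α : Type*} {k : ℕ} {A : Set α}
    (hA : A.Finite) (I : Finset ι) {E : ι → Set α} (hE : (I : Set ι).PairwiseDisjoint E)
    (hk : ∀ i ∈ I, k ≤ (E i ∩ A).ncard) : k * #I ≤ A.ncard :=
  calc k * #I = ∑ i ∈ I, k := by rw [sum_const, smul_eq_mul, mul_comm]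
    _ ≤ ∑ i ∈ I, (E i ∩ A).ncard := sum_le_sum hk
    _ = (⋃ i ∈ (I : Set ι), E i ∩ A).ncard := by
      rw [Set.Finite.ncard_biUnion I.finite_toSet (fun i _ => hA.inter_of_right _)
        (hE.mono fun i => Set.inter_subset_left), finsum_mem_coe_finset]
    _ ≤ A.ncard := Set.ncard_le_ncard (Set.iUnion₂_subset fun i _ => Set.inter_subset_right) hA

theorem stmt_10_general {V : Type*} [Fintype V] (G : SimpleGraph V) (s : V)
    (S : Set V) (hs : s ∈ S) (F : Set (Sym2 V))
    (col : V → Bool) (hbip : ∀ x y : V, s(x, y) ∈ F → col x ≠ col y)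
    (n : ℕ) (T : Fin n → G.Walk s s)
    (htrail : ∀ i, (T i).IsTrail) (hodd : ∀ i, Odd (T i).length)
    (hdisj : ∀ i j, i ≠ j → ∀ e ∈ (T i).edges, e ∉ (T j).edges) :
    n ≤ {e ∈ G.edgeSet | (∀ x ∈ e, x ∈ S) ∧ e ∉ F}.ncard +
      ∑ᶠ K : (G.induce Sᶜ).ConnectedComponent,
        {e ∈ G.edgeSet | ∃ (x y : V) (hy : y ∈ Sᶜ),
          e = s(x, y) ∧ x ∈ S ∧ (G.induce Sᶜ).connectedComponentMk ⟨y, hy⟩ = K}.ncard / 2 := by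
  classical
  set A := {e ∈ G.edgeSet | (∀ x ∈ e, x ∈ S) ∧ e ∉ F}
  change n ≤ A.ncard + ∑ᶠ K, (G.boundaryEdges S K).ncard / 2
  have hE : ∀ I : Finset (Fin n), (I : Set (Fin n)).PairwiseDisjoint fun i => (T i).edgeSet :=
    fun _ i _ j _ hij => Set.disjoint_left.2 (hdisj i j hij)
  let B := univ.filter fun i => ((T i).edgeSet ∩ A).Nonempty
  let BK K := univ.filter fun i => 1 < ((T i).edgeSet ∩ G.boundaryEdges S K).ncard
  have hcover : univ ⊆ B ∪ univ.biUnion BK := fun i _ => by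
    rcases (htrail i).edgeSet_inter_nonempty_or_one_lt_ncard_boundaryEdges hbip (hodd i) hs
      with h | ⟨K, hK⟩
    · exact mem_union_left _ (mem_filter.2 ⟨mem_univ i, h⟩)
    · simpa [BK] using .inr ⟨K, hK⟩
  have hB : #B ≤ A.ncard := by
    simpa using mul_card_le_ncard_of_pairwiseDisjoint A.toFinite B (hE B)
      fun i hi => (Set.ncard_pos (Set.toFinite _)).2 (mem_filter.1 hi).2
  have hBK K : #(BK K) ≤ (G.boundaryEdges S K).ncard / 2 := by
    rw [Nat.le_div_iff_mul_le two_pos, mul_comm]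
    exact mul_card_le_ncard_of_pairwiseDisjoint (Set.toFinite _) (BK K) (hE _)
      fun i hi => (mem_filter.1 hi).2
  rw [finsum_eq_sum_of_fintype]
  calc n = #(univ : Finset (Fin n)) := by simp
    _ ≤ #B + ∑ K, #(BK K) := (card_le_card hcover).trans
        ((card_union_le _ _).trans (Nat.add_le_add_left card_biUnion_le _))
    _ ≤ _ := Nat.add_le_add hB (sum_le_sum fun K _ => hBK K)

theorem stmt_10 {V : Type*} [Fintype V] (G : SimpleGraph V) (s : V)
    (S : Set V) (hs : s ∈ S) (F : Set (Sym2 V)) (hFE : F ⊆ G.edgeSet)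
    (hFS : ∀ e ∈ F, ∀ x ∈ e, x ∈ S)
    (col : V → Bool) (hbip : ∀ x y : V, s(x, y) ∈ F → col x ≠ col y)
    (n : ℕ) (T : Fin n → G.Walk s s)
    (htrail : ∀ i, (T i).IsTrail) (hodd : ∀ i, Odd (T i).length)
    (hdisj : ∀ i j, i ≠ j → ∀ e ∈ (T i).edges, e ∉ (T j).edges) :
    n ≤ {e ∈ G.edgeSet | (∀ x ∈ e, x ∈ S) ∧ e ∉ F}.ncard +
      ∑ᶠ K : (G.induce Sᶜ).ConnectedComponent,
        {e ∈ G.edgeSet | ∃ (x y : V) (hy : y ∈ Sᶜ),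
          e = s(x, y) ∧ x ∈ S ∧ (G.induce Sᶜ).connectedComponentMk ⟨y, hy⟩ = K}.ncard / 2 :=
  stmt_10_general G s S hs F col hbip n T htrail hodd hdisj
end

section
/- Let C be an odd-(s,s)-trail cover of the graph Ĝ obtained from G − E_{uv} by identifying u and v into s, where E_{uv} is the set of u–v edges of G. Then C ∪ E_{uv} (viewed as edges of G) is an odd-(u,v)-trail cover of G. -/
/-- The vertex map identifying `v` with `u` (the merged vertex `s` is `u`). -/
def identify {V : Type*} [DecidableEq V] (u v : V) (x : V) : V := if x = v then u else x

/-- A list `L` of edges of `G - E_{uv}` is an `(s,s)`-trail of the graph `Ĝ` obtained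
from `G - E_{uv}` by identifying `u` and `v` into `s`:  the edges are distinct edges of
`G` other than `uv`, and there is a vertex sequence witnessing that, after applying the
identification, they form a closed walk at `s`.  (Edges of `Ĝ` correspond bijectively
to edges of `G - E_{uv}`, so trails of the multigraph `Ĝ` are encoded by such lists.) -/
def IsGhatTrail {V : Type*} [DecidableEq V] (G : SimpleGraph V) (u v : V)
    (L : List (Sym2 V)) : Prop :=
  L.Nodup ∧ (∀ e ∈ L, e ∈ G.edgeSet ∧ e ≠ s(u, v)) ∧
    ∃ c : Fin (L.length + 1) → V,
      identify u v (c 0) = u ∧ identify u v (c (Fin.last L.length)) = u ∧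
      ∀ i : Fin L.length,
        Sym2.map (identify u v) (L.get i) =
          s(identify u v (c i.castSucc), identify u v (c i.succ))

lemma edges_getElem_eq {V : Type*} {G : SimpleGraph V} {a b : V} (p : G.Walk a b) :
    ∀ i : ℕ, ∀ h : i < p.length,
      p.edges[i]'(by simpa using h) = s(p.getVert i, p.getVert (i + 1)) := by
  induction p with
  | nil => intro i h; simp at h
  | cons hadj q ih =>
    intro i h
    cases i with
    | zero => simp [SimpleGraph.Walk.edges, SimpleGraph.Walk.getVert]
    | succ n =>
      have hn : n < q.length := by simpa using h
      simpa [SimpleGraph.Walk.edges, SimpleGraph.Walk.getVert] using ih n hn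

theorem stmt_13 {V : Type*} [DecidableEq V] (G : SimpleGraph V) (u v : V)
    (huv : u ≠ v) (C : Set (Sym2 V))
    (hcov : ∀ L : List (Sym2 V), IsGhatTrail G u v L → Odd L.length →
      ∃ e ∈ L, e ∈ C) :
    ∀ T : G.Walk u v, T.IsTrail → Odd T.length →
      ∃ e ∈ T.edges, e ∈ C ∨ e = s(u, v) := by
  intro T hT hodd
  by_cases huvE : s(u, v) ∈ T.edges
  · exact ⟨s(u, v), huvE, Or.inr rfl⟩
  · have hlen : T.edges.length = T.length := T.length_edges
    have hghat : IsGhatTrail G u v T.edges := by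
      refine ⟨hT.edges_nodup, ?_, ?_⟩
      · intro e he
        exact ⟨T.edges_subset_edgeSet he, fun h => huvE (h ▸ he)⟩
      · refine ⟨fun i => T.getVert i, ?_, ?_, ?_⟩
        · simp [identify, huv]
        · have : T.getVert T.edges.length = v := by
            rw [hlen]; exact T.getVert_length
          simp [Fin.last, this, identify]
        · intro i
          have hi : (i : ℕ) < T.length := by rw [← hlen]; exact i.2
          have := edges_getElem_eq T i hi
          simp only [List.get_eq_getElem]
          rw [show T.edges[(i : ℕ)]'(by simpa using hi) =
              s(T.getVert i, T.getVert (i + 1)) from this]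
          simp [Fin.castSucc, Fin.succ, Sym2.map_pair_eq]
    obtain ⟨e, he, hC⟩ := hcov T.edges hghat (by rwa [hlen])
    exact ⟨e, he, Or.inl hC⟩
end

section
/- Let T be an odd closed trail at v in a graph G, let P be a u–v path, and suppose the first edge of P that lies on T occurs at a point where P has reached vertex x; let Q be the prefix of P from u to x. Splitting T at an occurrence of x gives subtrails S_1, S_2 with |S_1| + |S_2| odd, and for the S_i of appropriate parity, the concatenation Q + S_i is an odd (u,v)-trail that is edge-disjoint from any trail edge-disjoint from both P and T. -/
open SimpleGraph Walk

theorem stmt_14 {V : Type*} (G : SimpleGraph V) (u v x : V)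
    (P : G.Walk u v) (hP : P.IsPath)
    (T : G.Walk v v) (hT : T.IsTrail) (hTodd : Odd T.length) (hx : x ∈ T.support)
    (Q : G.Walk u x) (hQ : Q.IsTrail)
    (hQP : ∀ e ∈ Q.edges, e ∈ P.edges) (hQT : ∀ e ∈ Q.edges, e ∉ T.edges) :
    (∃ (S₁ : G.Walk v x) (S₂ : G.Walk x v),
      S₁.length + S₂.length = T.length ∧ Odd (S₁.length + S₂.length) ∧
      (∀ e ∈ S₁.edges, e ∈ T.edges) ∧ (∀ e ∈ S₂.edges, e ∈ T.edges)) ∧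
    ∃ R : G.Walk u v, R.IsTrail ∧ Odd R.length ∧
      (∀ e ∈ R.edges, e ∈ Q.edges ∨ e ∈ T.edges) ∧
      ∀ (w z : V) (W : G.Walk w z),
        (∀ e ∈ W.edges, e ∉ P.edges ∧ e ∉ T.edges) →
        ∀ e ∈ R.edges, e ∉ W.edges := by
  classical
  set S₁ := T.takeUntil x hx with hS₁
  set S₂ := T.dropUntil x hx with hS₂
  have hsum : S₁.length + S₂.length = T.length := by
    conv_rhs => rw [← T.take_spec hx]
    rw [SimpleGraph.Walk.length_append]
  have e1 : ∀ e ∈ S₁.edges, e ∈ T.edges := fun e he =>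
    SimpleGraph.Walk.edges_takeUntil_subset _ hx he
  have e2 : ∀ e ∈ S₂.edges, e ∈ T.edges := fun e he =>
    SimpleGraph.Walk.edges_dropUntil_subset _ hx he
  refine ⟨⟨S₁, S₂, hsum, hsum ▸ hTodd, e1, e2⟩, ?_⟩
  obtain ⟨S, hS, hSsub, hSodd⟩ : ∃ S : G.Walk x v, S.IsTrail ∧
      (∀ e ∈ S.edges, e ∈ T.edges) ∧ Odd (Q.length + S.length) := by
    rcases Nat.even_or_odd (Q.length + S₂.length) with h | h
    · refine ⟨S₁.reverse, (hT.takeUntil hx).reverse, ?_, ?_⟩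
      · intro e he
        exact e1 e (by simpa using he)
      · rw [SimpleGraph.Walk.length_reverse, Nat.odd_iff]
        rw [Nat.even_iff] at h
        have := hsum ▸ hTodd
        rw [Nat.odd_iff] at this
        omega
    · exact ⟨S₂, hT.dropUntil hx, e2, h⟩
  have hdisj : ∀ e ∈ Q.edges, e ∉ S.edges := fun e he hes => hQT e he (hSsub e hes)
  refine ⟨Q.append S, ?_, ?_, ?_, ?_⟩
  · rw [SimpleGraph.Walk.isTrail_def, SimpleGraph.Walk.edges_append]
    exact List.Nodup.append hQ.edges_nodup hS.edges_nodup
      (List.disjoint_left.mpr hdisj)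
  · simpa [SimpleGraph.Walk.length_append] using hSodd
  · intro e he
    rw [SimpleGraph.Walk.edges_append, List.mem_append] at he
    exact he.imp id (hSsub e)
  · intro w z W hW e he hew
    rw [SimpleGraph.Walk.edges_append, List.mem_append] at he
    rcases he with he | he
    · exact (hW e hew).1 (hQP e he)
    · exact (hW e hew).2 (hSsub e he)
end
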